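/- arXiv:math/0502444 — 3 statements merged into one kernel-verified Lean document; each statement's English description precedes it below -/
import Mathlib

section
/- The map E : W*(G) → D_G sending a = Σ_{w ∈ F⁺(G:a)} p_w L_w^{u_w} to Σ_{v ∈ V(G:a)} p_v L_v (the diagonal part of the Fourier expansion) is a conditional expectation: it is linear, E(d) = d for all d ∈ D_G, and E(d₁ a d₂) = d₁ E(a) d₂ for all d₁, d₂ ∈ D_G and a ∈ W*(G). -/
noncomputable section

/-- The graph Hilbert space `H_G = ℓ²(F⁺(G))`. -/
abbrev HG (W : Type) : Type := lp (fun _ : W => ℂ) 2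

/-- The canonical orthonormal basis vector `ξ_w`. -/
noncomputable def xi {W : Type} [DecidableEq W] (w : W) : HG W := lp.single 2 w 1

lemma clm_ext_xi {W : Type} [DecidableEq W] {A B : HG W →L[ℂ] HG W}
    (h : ∀ w, A (xi w) = B (xi w)) : A = B := by
  refine ContinuousLinearMap.ext fun f => ?_
  have hf : HasSum (fun w : W => lp.single 2 w (f w)) f :=
    lp.hasSum_single ENNReal.ofNat_ne_top f
  have hsingle : ∀ w : W, lp.single (E := fun _ : W => ℂ) 2 w (f w) = f w • xi w := by
    intro w
    rw [xi, ← lp.single_smul, smul_eq_mul, mul_one]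
  have hA : HasSum (fun w : W => f w • A (xi w)) (A f) := by
    simpa [hsingle] using A.hasSum hf
  have hB : HasSum (fun w : W => f w • A (xi w)) (B f) := by
    have := B.hasSum hf
    simpa [hsingle, h] using this
  exact hA.unique hB

lemma xi_inner_eq {W : Type} [DecidableEq W] (k : W) (f : HG W) :
    (inner ℂ (xi k) f : ℂ) = f k := by
  rw [xi, lp.inner_single_left]
  simp [RCLike.inner_apply]

set_option maxHeartbeats 1000000 in
/-- The map `E : W*(G) → D_G` sending `a = Σ_w p_w L_w^{u_w}` to its diagonal
part `Σ_{v ∈ V(G:a)} p_v L_v` is a conditional expectation: it is linear, `E(d) = d` for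
every diagonal `d`, and `E(d₁ a d₂) = d₁ E(a) d₂` for diagonal `d₁, d₂` (stated on the
dense *-subalgebra of finite linear combinations of the generators). -/
theorem diagonal_map_is_conditional_expectation
    {W : Type} [DecidableEq W]
    (mul : W → W → Option W) (isV : W → Prop) (rng src : W → W)
    (L : W → (HG W →L[ℂ] HG W))
    (hL : ∀ u h : W, L u (xi h) = (mul u h).elim 0 xi)
    (hVmul : ∀ v h : W, isV v → mul v h = if rng h = v then some h else none)
    (hadm : ∀ a b : W, (mul a b).isSome ↔ src a = rng b)
    (hprod : ∀ a b c : W, mul a b = some c → rng c = rng a ∧ src c = src b)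
    (hvert : ∀ v : W, isV v → rng v = v ∧ src v = v)
    -- `E` is a linear map fixing the vertex projections and killing the other generators
    (E : (HG W →L[ℂ] HG W) →ₗ[ℂ] (HG W →L[ℂ] HG W))
    (hE₁ : ∀ v : W, isV v → E (L v) = L v)
    (hE₂ : ∀ w : W, ¬ isV w →
      E (L w) = 0 ∧ E (ContinuousLinearMap.adjoint (L w)) = 0) :
    -- `E(d) = d` for all diagonal `d`
    (∀ (t : Finset W) (q : W → ℂ), (∀ v ∈ t, isV v) →
      E (∑ v ∈ t, q v • L v) = ∑ v ∈ t, q v • L v) ∧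
    -- the `D_G`-bimodule property `E(d₁ a d₂) = d₁ E(a) d₂`
    (∀ (s : Finset W) (p : W → ℂ) (u : W → Bool)
        (t₁ t₂ : Finset W) (q₁ q₂ : W → ℂ),
      (∀ v ∈ t₁, isV v) → (∀ v ∈ t₂, isV v) →
      E ((∑ v ∈ t₁, q₁ v • L v) *
          (∑ w ∈ s, p w • (if u w then L w else ContinuousLinearMap.adjoint (L w))) *
          (∑ v ∈ t₂, q₂ v • L v))
        = (∑ v ∈ t₁, q₁ v • L v) *
            E (∑ w ∈ s, p w • (if u w then L w else ContinuousLinearMap.adjoint (L w))) *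
            (∑ v ∈ t₂, q₂ v • L v)) := by
  -- action of vertex generators on the basis
  have hLv : ∀ v h : W, isV v → L v (xi h) = if rng h = v then xi h else 0 := by
    intro v h hv
    rw [hL, hVmul v h hv]
    split_ifs <;> simp
  -- L v * L w = if rng w = v then L w else 0
  have hmulL : ∀ v w : W, isV v → L v * L w = if rng w = v then L w else 0 := by
    intro v w hv
    apply clm_ext_xi
    intro h
    rw [ContinuousLinearMap.mul_apply, hL w h]
    cases hc : mul w h with
    | none =>
      simp only [Option.elim, map_zero]
      split_ifs <;> simp [hL w h, hc]
    | some c =>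
      have hrc := (hprod w h c hc).1
      simp only [Option.elim, hLv v c hv, hrc]
      split_ifs <;> simp [hL w h, hc]
  -- L w * L v = if src w = v then L w else 0
  have hLmul : ∀ v w : W, isV v → L w * L v = if src w = v then L w else 0 := by
    intro v w hv
    apply clm_ext_xi
    intro h
    rw [ContinuousLinearMap.mul_apply, hLv v h hv]
    by_cases hs : src w = v
    · simp only [hs, if_true]
      by_cases hr : rng h = v
      · simp [hr]
      · have : mul w h = none := by
          rw [← Option.not_isSome_iff_eq_none, hadm]
          rw [hs]; exact fun hh => hr hh.symm
        simp [hr, hL w h, this]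
    · simp only [hs, if_false, ContinuousLinearMap.zero_apply]
      by_cases hr : rng h = v
      · have : mul w h = none := by
          rw [← Option.not_isSome_iff_eq_none, hadm, hr]
          exact hs
        simp [hr, hL w h, this]
      · simp [hr]
  -- the vertex generators are selfadjoint
  have hadj : ∀ v : W, isV v → ContinuousLinearMap.adjoint (L v) = L v := by
    intro v hv
    apply clm_ext_xi
    intro h
    apply lp.ext
    funext k
    have h1 : (ContinuousLinearMap.adjoint (L v) (xi h)) k
        = (inner ℂ (xi k) (ContinuousLinearMap.adjoint (L v) (xi h)) : ℂ) :=
      (xi_inner_eq k _).symm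
    rw [h1, ContinuousLinearMap.adjoint_inner_right, hLv v k hv, hLv v h hv]
    by_cases hkh : k = h
    · subst hkh
      split_ifs <;> simp [xi_inner_eq, -inner_self_eq_norm_sq_to_K]
    · have hx : (xi h : HG W) k = 0 := by
        rw [xi, lp.single_apply]
        exact dif_neg hkh
      have hx' : (inner ℂ (xi k) (xi h) : ℂ) = 0 := by rw [xi_inner_eq, hx]
      split_ifs <;> simp [hx, hx']
  -- first statement: E fixes the diagonal
  have part1 : ∀ (t : Finset W) (q : W → ℂ), (∀ v ∈ t, isV v) →
      E (∑ v ∈ t, q v • L v) = ∑ v ∈ t, q v • L v := by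
    intro t q ht
    rw [map_sum]
    refine Finset.sum_congr rfl fun v hv => ?_
    rw [map_smul, hE₁ v (ht v hv)]
  refine ⟨part1, ?_⟩
  intro s p u t₁ t₂ q₁ q₂ ht₁ ht₂
  set X : W → (HG W →L[ℂ] HG W) :=
    fun w => if u w then L w else ContinuousLinearMap.adjoint (L w) with hX
  -- products with adjoints of generators
  have h1 : ∀ v w : W, isV v →
      L v * ContinuousLinearMap.adjoint (L w)
        = if src w = v then ContinuousLinearMap.adjoint (L w) else 0 := by
    intro v w hv
    have h := congrArg star (hLmul v w hv)
    rw [star_mul, ContinuousLinearMap.star_eq_adjoint,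
      ContinuousLinearMap.star_eq_adjoint, hadj v hv, apply_ite star, star_zero,
      ContinuousLinearMap.star_eq_adjoint] at h
    exact h
  have h2 : ∀ v w : W, isV v →
      ContinuousLinearMap.adjoint (L w) * L v
        = if rng w = v then ContinuousLinearMap.adjoint (L w) else 0 := by
    intro v w hv
    have h := congrArg star (hmulL v w hv)
    rw [star_mul, ContinuousLinearMap.star_eq_adjoint,
      ContinuousLinearMap.star_eq_adjoint, hadj v hv, apply_ite star, star_zero,
      ContinuousLinearMap.star_eq_adjoint] at h
    exact h
  -- the key single-term identity
  have term : ∀ v₁ v₂ w : W, isV v₁ → isV v₂ →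
      E (L v₁ * X w * L v₂) = L v₁ * E (X w) * L v₂ := by
    intro v₁ v₂ w hv₁ hv₂
    by_cases hw : isV w
    · -- for a vertex, X w = L w
      have hXw : X w = L w := by
        simp only [hX]
        split_ifs with hu
        · rfl
        · exact hadj w hw
      simp only [hXw, hE₁ w hw, hmulL v₁ w hv₁, ite_mul, zero_mul, hLmul v₂ w hv₂]
      split_ifs <;> simp [hE₁ w hw]
    · -- for a non-vertex, E kills X w
      have hEX : E (X w) = 0 := by
        simp only [hX]
        split_ifs
        · exact (hE₂ w hw).1
        · exact (hE₂ w hw).2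
      rw [hEX, mul_zero, zero_mul]
      by_cases hu : u w
      · have hXw : X w = L w := by simp only [hX, hu, if_true]
        simp only [hXw, hmulL v₁ w hv₁, ite_mul, zero_mul, hLmul v₂ w hv₂]
        split_ifs <;> simp [(hE₂ w hw).1]
      · have hXw : X w = ContinuousLinearMap.adjoint (L w) := by
          simp only [hX, hu, if_false, Bool.false_eq_true]
        simp only [hXw, h1 v₁ w hv₁, ite_mul, zero_mul, h2 v₂ w hv₂]
        split_ifs <;> simp [(hE₂ w hw).2]
  -- expand the triple product of sums
  have expand : ∀ (A : W → HG W →L[ℂ] HG W),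
      (∑ v ∈ t₁, q₁ v • L v) * (∑ w ∈ s, p w • A w) * (∑ v ∈ t₂, q₂ v • L v)
        = ∑ v₂ ∈ t₂, ∑ w ∈ s, ∑ v₁ ∈ t₁,
            (q₂ v₂ * (p w * q₁ v₁)) • (L v₁ * (A w * L v₂)) := by
    intro A
    simp only [Finset.sum_mul, Finset.mul_sum, Finset.smul_sum, smul_mul_assoc,
      mul_smul_comm, smul_smul, mul_assoc]
  rw [expand, map_sum]
  have hmid : E (∑ w ∈ s, p w • X w) = ∑ w ∈ s, p w • E (X w) := by
    rw [map_sum]; simp_rw [map_smul]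
  rw [hmid]
  have expand2 := expand (fun w => E (X w))
  rw [expand2]
  refine Finset.sum_congr rfl fun v₂ hv₂ => ?_
  rw [map_sum]
  refine Finset.sum_congr rfl fun w hw => ?_
  rw [map_sum]
  refine Finset.sum_congr rfl fun v₁ hv₁ => ?_
  rw [map_smul]
  congr 1
  rw [← mul_assoc, ← mul_assoc]
  exact term v₁ v₂ w (ht₁ v₁ hv₁) (ht₂ v₂ hv₂)
end
end

section
/- For l a loop based at a vertex v and any n ∈ ℕ, ⟨ξ_v, (L_l + L_l*)^n ξ_v⟩ equals 0 when n is odd, and equals the n/2-th Catalan number when n is even. In particular the operator L_l + L_l* is even with moments given by Catalan numbers with respect to the vector state at ξ_v. -/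
/-!
On the vectors `ξ_{l^k}` the creation operator `L_l` is the unilateral shift, and since `v` is not of
the form `l h` and `l h` determines `h`, its adjoint is the backward shift killing `ξ_v`. So
`⟪ξ_{l^j}, (L_l + L_l*)^n ξ_v⟫` counts the `±1` walks of length `n` from height `0` to height `j`
that never go below `0`. Cutting such a walk at its last visit to `0` gives the Catalan recurrence for
the returning walks, and a walk of odd length cannot return.
-/

noncomputable section

open Finset

/-- `ballot n k` counts the `±1` walks of length `n` from height `0` to height `k` that never go
below `0`. -/
def ballot : ℕ → ℕ → ℕ
  | 0, 0 => 1
  | 0, _ + 1 => 0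
  | n + 1, 0 => ballot n 1
  | n + 1, k + 1 => ballot n k + ballot n (k + 2)

theorem ballot_eq_zero_of_odd {n k : ℕ} (h : (n + k) % 2 = 1) : ballot n k = 0 := by
  induction n generalizing k with
  | zero => cases k with
    | zero => simp at h
    | succ k => rfl
  | succ n ih => cases k with
    | zero => exact ih (by omega)
    | succ k => rw [ballot, ih (by omega), ih (by omega)]

theorem ballot_succ_succ (n k : ℕ) :
    ballot (n + 1) (k + 1) = ∑ p ∈ antidiagonal n, ballot p.1 0 * ballot p.2 k := by
  induction n generalizing k with
  | zero => cases k <;> rfl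
  | succ n ih =>
    rw [Nat.sum_antidiagonal_succ']
    cases k with
    | zero =>
      rw [show ballot (n + 2) 1 = ballot (n + 1) 0 + ballot (n + 1) 2 from rfl, ih 1]
      simp [ballot]
    | succ k =>
      rw [show ballot (n + 2) (k + 2) = ballot (n + 1) (k + 1) + ballot (n + 1) (k + 3) from rfl,
        ih, ih]
      simp [ballot, mul_add, sum_add_distrib]

theorem sum_antidiagonal_two_mul {M : Type*} [AddCommMonoid M] {g : ℕ × ℕ → M}
    (hg : ∀ p, p.1 % 2 = 1 → g p = 0) (m : ℕ) :
    ∑ p ∈ antidiagonal (2 * m), g p = ∑ p ∈ antidiagonal m, g (2 * p.1, 2 * p.2) := by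
  rw [← sum_image (s := antidiagonal m) (g := fun p => (2 * p.1, 2 * p.2)) fun p _ q _ h => by
    simp only [Prod.mk.injEq] at h; ext <;> omega]
  refine (sum_subset (fun p hp => ?_) fun p hp hnot => hg p ?_).symm
  · obtain ⟨q, hq, rfl⟩ := mem_image.1 hp
    rw [HasAntidiagonal.mem_antidiagonal] at hq ⊢
    omega
  · rw [HasAntidiagonal.mem_antidiagonal] at hp
    by_contra hodd
    refine hnot (mem_image.2 ⟨(p.1 / 2, p.2 / 2), ?_, ?_⟩)
    · rw [HasAntidiagonal.mem_antidiagonal]; omega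
    · ext <;> dsimp only <;> omega

theorem ballot_two_mul_zero (m : ℕ) : ballot (2 * m) 0 = catalan m := by
  induction m using Nat.strong_induction_on with
  | _ m ih =>
  cases m with
  | zero => simp [ballot]
  | succ m =>
    rw [catalan_succ', show ballot (2 * (m + 1)) 0 = ballot (2 * m + 1) (0 + 1) from rfl,
      ballot_succ_succ, sum_antidiagonal_two_mul]
    · refine sum_congr rfl fun p hp => ?_
      rw [HasAntidiagonal.mem_antidiagonal] at hp
      rw [ih p.1 (by omega), ih p.2 (by omega)]
    · intro p hp
      rw [ballot_eq_zero_of_odd (by omega), zero_mul]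

theorem LinearMap.IsSymmetric.inner_pow_apply_eq_ballot {𝕜 E : Type*} [RCLike 𝕜]
    [NormedAddCommGroup E] [InnerProductSpace 𝕜 E] {T : E →ₗ[𝕜] E} (hT : T.IsSymmetric)
    {e : ℕ → E} (he : Orthonormal 𝕜 e) (h0 : T (e 0) = e 1)
    (hsucc : ∀ k, T (e (k + 1)) = e (k + 2) + e k) (n j : ℕ) :
    inner 𝕜 (e j) ((T ^ n) (e 0)) = ballot n j := by
  induction n generalizing j with
  | zero =>
    rw [pow_zero, Module.End.one_apply, orthonormal_iff_ite.1 he]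
    cases j <;> simp [ballot]
  | succ n ih =>
    rw [pow_succ', Module.End.mul_apply, ← hT]
    cases j with
    | zero => rw [h0, ih]; rfl
    | succ j => rw [hsucc, inner_add_left, ih, ih, ballot]; push_cast; ring

section ShiftOnBasis

variable {W : Type} [DecidableEq W]

theorem inner_xi_left (w : W) (x : HG W) : inner ℂ (xi w) x = x w := by
  simp [xi, lp.inner_single_left]

theorem inner_xi_xi (a b : W) : inner ℂ (xi a) (xi b : HG W) = if a = b then 1 else 0 := by
  rw [inner_xi_left]
  simp [xi, Pi.single_apply]

theorem orthonormal_xi : Orthonormal ℂ (xi : W → HG W) :=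
  orthonormal_iff_ite.2 inner_xi_xi

variable {f : W → Option W} {A : HG W →L[ℂ] HG W}

theorem inner_xi_adjoint_apply_xi (hA : ∀ h, A (xi h) = (f h).elim 0 xi) (h c : W) :
    inner ℂ (xi h) (A.adjoint (xi c)) = if f h = some c then 1 else 0 := by
  rw [ContinuousLinearMap.adjoint_inner_right, hA]
  cases f h with
  | none => simp
  | some b => simp [inner_xi_xi]

theorem adjoint_apply_xi_eq_zero (hA : ∀ h, A (xi h) = (f h).elim 0 xi) {c : W}
    (hc : ∀ h, f h ≠ some c) : A.adjoint (xi c) = 0 :=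
  lp.ext <| funext fun h => by
    rw [← inner_xi_left, inner_xi_adjoint_apply_xi hA, if_neg (hc h)]; rfl

theorem adjoint_apply_xi_eq (hA : ∀ h, A (xi h) = (f h).elim 0 xi) {b c : W}
    (hb : f b = some c) (huniq : ∀ h, f h = some c → h = b) : A.adjoint (xi c) = xi b :=
  lp.ext <| funext fun h => by
    rw [← inner_xi_left, inner_xi_adjoint_apply_xi hA]
    by_cases hh : h = b
    · simp [hh, hb, xi]
    · simp [xi, hh, mt (huniq h) hh]

end ShiftOnBasis

/-- For `l` a loop based at a vertex `v` (with all powers `l^k` distinct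
admissible loops), the moments of `L_l + L_l*` in the vector state at `ξ_v` are the Catalan
numbers: `⟨ξ_v, (L_l + L_l*)^n ξ_v⟩ = 0` for `n` odd, and `= C_{n/2}` for `n` even. -/
theorem loop_semicircular_moments_catalan
    {W : Type} [DecidableEq W]
    (mul : W → W → Option W) (l v : W)
    -- the powers of the loop: `pow 0 = v`, `pow (k+1) = l · pow k`, all distinct
    (pow : ℕ → W)
    (hpow0 : pow 0 = v)
    (hpowsucc : ∀ k : ℕ, mul l (pow k) = some (pow (k + 1)))
    (hpowinj : Function.Injective pow)
    -- `v` itself does not factor through `l`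
    (hbase : ∀ h : W, mul l h ≠ some v)
    -- left cancellation for `l`
    (hinj : ∀ h₁ h₂ c : W, mul l h₁ = some c → mul l h₂ = some c → h₁ = h₂)
    (Ll : HG W →L[ℂ] HG W)
    (hLl : ∀ h : W, Ll (xi h) = (mul l h).elim 0 xi) :
    ∀ n : ℕ,
      (inner ℂ (xi v) (((Ll + ContinuousLinearMap.adjoint Ll) ^ n) (xi v)) : ℂ)
        = if n % 2 = 1 then 0 else (catalan (n / 2) : ℂ) := by
  intro n
  set T := Ll + ContinuousLinearMap.adjoint Ll
  have hT : (T : HG W →ₗ[ℂ] HG W).IsSymmetric := by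
    refine IsSelfAdjoint.isSymmetric ?_
    simpa [T, ContinuousLinearMap.star_eq_adjoint] using IsSelfAdjoint.add_star_self Ll
  have hshift (k : ℕ) : Ll (xi (pow k)) = xi (pow (k + 1)) := by simp [hLl, hpowsucc]
  have h0 : T (xi (pow 0)) = xi (pow 1) := by
    simp [T, hshift, adjoint_apply_xi_eq_zero hLl (hpow0 ▸ hbase)]
  have hsucc (k : ℕ) : T (xi (pow (k + 1))) = xi (pow (k + 2)) + xi (pow k) := by
    simp [T, hshift, adjoint_apply_xi_eq hLl (hpowsucc k) fun h hh => hinj _ _ _ hh (hpowsucc k)]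
  have hmoment := hT.inner_pow_apply_eq_ballot (orthonormal_xi.comp pow hpowinj) h0 hsucc n 0
  rw [← ContinuousLinearMap.toLinearMap_pow] at hmoment
  rw [← hpow0]
  refine hmoment.trans ?_
  split_ifs with hn
  · simp [ballot_eq_zero_of_odd (k := 0) hn]
  · obtain ⟨m, rfl⟩ : ∃ m, n = 2 * m := ⟨n / 2, by omega⟩
    rw [ballot_two_mul_zero, Nat.mul_div_cancel_left m two_pos]
end
end

section
/- For a finite non-loop path w = xwy with x ≠ y, the odd moments of the self-adjoint operator L_w + L_w* vanish: E((L_w + L_w*)^{2k+1}) = 0 for all k ≥ 0, where E is the diagonal conditional expectation (equivalently, all diagonal matrix entries ⟨ξ_h, (L_w + L_w*)^{2k+1} ξ_h⟩ vanish). -/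
/-!
`L_w` raises the length of a basis path by `|w| > 0` and `L_w*` lowers it by `|w|`, so each
application of `L_w + L_w*` changes the length by `±|w|`. Hence `(L_w + L_w*)^n ξ_h` is supported
on paths of length `|h| + m|w|` with `m ≡ n (mod 2)`; for odd `n` this excludes `h` itself.
-/

noncomputable section

open Function ContinuousLinearMap

theorem lp.inner_eq_zero_of_disjoint_support {𝕜 ι E : Type*} [RCLike 𝕜]
    [NormedAddCommGroup E] [InnerProductSpace 𝕜 E] {u v : lp (fun _ : ι => E) 2}
    (h : Disjoint (support ⇑u) (support ⇑v)) : inner 𝕜 u v = 0 := by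
  refine (lp.hasSum_inner u v).unique (hasSum_zero.congr_fun fun p => ?_)
  by_cases hu : u p = 0
  · simp [hu]
  · simp [notMem_support.mp (h.notMem_of_mem_left hu)]

namespace HG

variable {W : Type} [DecidableEq W]

theorem inner_xi_left (p : W) (v : HG W) : inner ℂ (xi p) v = v p := by
  simp [xi, lp.inner_single_left]

theorem support_xi_subset (p : W) : support ⇑(xi p) ⊆ {p} :=
  Pi.support_single_subset

theorem smul_xi (p : W) (c : ℂ) : c • xi p = lp.single 2 p c := by
  rw [xi, ← lp.single_smul, smul_eq_mul, mul_one]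

theorem support_apply_subset {T : HG W →L[ℂ] HG W} {S S' : Set W}
    (hT : ∀ p ∈ S, support ⇑(T (xi p)) ⊆ S') {v : HG W} (hv : support ⇑v ⊆ S) :
    support ⇑(T v) ⊆ S' := by
  intro g hg
  by_contra hgS'
  have hsum : HasSum (fun p => v p * T (xi p) g) (T v g) := by
    have := ((lp.hasSum_single ENNReal.ofNat_ne_top v).mapL T).mapL (innerSL ℂ (xi g))
    simpa [← smul_xi, inner_xi_left] using this
  refine hg (hsum.unique (hasSum_zero.congr_fun fun p => ?_))
  by_cases hp : p ∈ S
  · simp [notMem_support.mp fun hg' => hgS' (hT p hp hg')]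
  · simp [notMem_support.mp fun hp' => hp (hv hp')]

theorem support_adjoint_apply_subset {T : HG W →L[ℂ] HG W} {S S' : Set W}
    (hT : ∀ p ∉ S, Disjoint (support ⇑(T (xi p))) S') {v : HG W} (hv : support ⇑v ⊆ S') :
    support ⇑(adjoint T v) ⊆ S := by
  intro p hp
  by_contra hpS
  apply hp
  rw [← inner_xi_left, adjoint_inner_right]
  exact lp.inner_eq_zero_of_disjoint_support ((hT p hpS).mono_right hv)

def degreeParitySet (d : W → ℤ) (b ℓ n : ℤ) : Set W :=
  {g | ∃ j : ℤ, d g = b + ℓ * (n + 2 * j)}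

section DegreeShift

variable {d : W → ℤ} {ℓ : ℤ} {T : HG W →L[ℂ] HG W}

theorem support_add_adjoint_apply_subset_degreeParitySet
    (hT : ∀ p, support ⇑(T (xi p)) ⊆ {g | d g = d p + ℓ}) {b n : ℤ} {v : HG W}
    (hv : support ⇑v ⊆ degreeParitySet d b ℓ n) :
    support ⇑((T + adjoint T) v) ⊆ degreeParitySet d b ℓ (n + 1) := by
  have hraise : support ⇑(T v) ⊆ degreeParitySet d b ℓ (n + 1) := by
    refine support_apply_subset ?_ hv
    rintro p ⟨j, hp⟩ g hg
    refine ⟨j, ?_⟩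
    rw [hT p hg, hp]
    ring
  have hlower : support ⇑(adjoint T v) ⊆ degreeParitySet d b ℓ (n + 1) := by
    refine support_adjoint_apply_subset (fun p hp => Set.disjoint_left.mpr ?_) hv
    rintro g hg ⟨j, hgj⟩
    exact hp ⟨j - 1, by linear_combination (hT p hg).symm + hgj⟩
  rw [add_apply, lp.coeFn_add]
  exact (support_add _ _).trans (Set.union_subset hraise hlower)

theorem support_pow_add_adjoint_apply_xi_subset
    (hT : ∀ p, support ⇑(T (xi p)) ⊆ {g | d g = d p + ℓ}) (h : W) (n : ℕ) :
    support ⇑(((T + adjoint T) ^ n) (xi h)) ⊆ degreeParitySet d (d h) ℓ n := by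
  induction n with
  | zero =>
    refine (support_xi_subset h).trans ?_
    rintro g rfl
    exact ⟨0, by simp⟩
  | succ n ih =>
    rw [pow_succ', mul_apply_eq_comp, Nat.cast_succ]
    exact support_add_adjoint_apply_subset_degreeParitySet hT ih

theorem inner_xi_pow_add_adjoint_odd_eq_zero (hℓ : ℓ ≠ 0)
    (hT : ∀ p, support ⇑(T (xi p)) ⊆ {g | d g = d p + ℓ}) (k : ℕ) (h : W) :
    inner ℂ (xi h) (((T + adjoint T) ^ (2 * k + 1)) (xi h)) = 0 := by
  rw [inner_xi_left]
  by_contra hne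
  obtain ⟨j, hj⟩ := support_pow_add_adjoint_apply_xi_subset hT h (2 * k + 1) hne
  have hodd : ℓ * (2 * (k + j) + 1) = 0 := by push_cast at hj; linear_combination -hj
  rcases mul_eq_zero.mp hodd with h0 | h0
  · exact hℓ h0
  · omega

end DegreeShift

end HG

theorem nonloop_path_odd_moments_vanish_general
    {W : Type} [DecidableEq W]
    (mul : W → W → Option W) (len : W → ℕ)
    (w : W)
    -- `w` is a genuine finite path: it has positive length,
    (hlenw : 0 < len w)
    -- and length is additive on admissible concatenations
    (hlen : ∀ a b c : W, mul a b = some c → len c = len a + len b)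
    (Lw : HG W →L[ℂ] HG W)
    (hLw : ∀ h : W, Lw (xi h) = (mul w h).elim 0 xi) :
    ∀ (k : ℕ) (h : W),
      (inner ℂ (xi h) (((Lw + ContinuousLinearMap.adjoint Lw) ^ (2 * k + 1)) (xi h)) : ℂ)
        = 0 := by
  have hraise : ∀ p, support ⇑(Lw (xi p)) ⊆ {g | (len g : ℤ) = len p + len w} := by
    intro p
    rw [hLw p]
    rcases hp : mul w p with _ | c
    · exact fun g hg => absurd rfl hg
    · refine (HG.support_xi_subset c).trans ?_
      rintro g rfl
      simp [hlen w p g hp, add_comm]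
  exact HG.inner_xi_pow_add_adjoint_odd_eq_zero (by positivity) hraise

/-- For a finite path `w = xwy` with `x ≠ y` (in fact for any finite path,
i.e. any `w` of positive length), all diagonal matrix entries of odd powers of the
self-adjoint operator `L_w + L_w*` vanish:
`⟨ξ_h, (L_w + L_w*)^{2k+1} ξ_h⟩ = 0` for all `k ≥ 0` and all `h ∈ F⁺(G)`; equivalently,
the odd `D_G`-moments `E((L_w + L_w*)^{2k+1})` vanish. -/
theorem nonloop_path_odd_moments_vanish
    {W : Type} [DecidableEq W]
    (mul : W → W → Option W) (rng src : W → W) (len : W → ℕ)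
    (w x y : W) (hwx : rng w = x) (hwy : src w = y) (hxy : x ≠ y)
    -- `w` is a genuine finite path: it has positive length,
    (hlenw : 0 < len w)
    -- and length is additive on admissible concatenations
    (hlen : ∀ a b c : W, mul a b = some c → len c = len a + len b)
    -- left cancellation for `w`
    (hinj : ∀ h₁ h₂ c : W, mul w h₁ = some c → mul w h₂ = some c → h₁ = h₂)
    (Lw : HG W →L[ℂ] HG W)
    (hLw : ∀ h : W, Lw (xi h) = (mul w h).elim 0 xi) :
    ∀ (k : ℕ) (h : W),
      (inner ℂ (xi h) (((Lw + ContinuousLinearMap.adjoint Lw) ^ (2 * k + 1)) (xi h)) : ℂ)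
        = 0 :=
  nonloop_path_odd_moments_vanish_general mul len w hlenw hlen Lw hLw
end
end
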